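/- Let h, w, s, m be positive integers. For any image x, any block base classifier f with block size s, any image x' that is an m×m patch perturbation of x, and every class c, the class counts satisfy |n_c(x) − n_c(x')| ≤ (m + s − 1)² (as integers). (Stability of block-smoothing counts, Equation 11 in the appendix.) -/

import Mathlib

/-!
The vote of a block classifier at `(a, b)` can only change if the block `B(a, b)` meets the
patch `Q(i, j)`, which forces `(a, b)` into the `(m + s - 1)`-square with corner
`(i - (s - 1), j - (s - 1))`. So at most `(m + s - 1)²` votes change, and the count of each
class moves by at most the number of changed votes.
-/

/-- The `L × L` square region (with cyclic wraparound) whose upper-left corner is `q`. -/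
def square {h w : ℕ} (L : ℕ) (q : ZMod h × ZMod w) : Set (ZMod h × ZMod w) :=
  {p | ∃ u v : ℕ, u < L ∧ v < L ∧ p = (q.1 + (u : ZMod h), q.2 + (v : ZMod w))}

open Finset

theorem abs_card_filter_sub_card_filter_le {α : Type*} [Fintype α] [DecidableEq α]
    (p q : α → Bool) :
    |(#(univ.filter fun a => p a = true) : ℤ) - #(univ.filter fun a => q a = true)|
      ≤ #(univ.filter fun a => p a ≠ q a) := by
  have hsub : ∀ {p q : α → Bool}, (univ.filter fun a => p a = true)
      ⊆ (univ.filter fun a => q a = true) ∪ univ.filter fun a => p a ≠ q a := by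
    intro p q a
    simp only [mem_union, mem_filter, mem_univ, true_and]
    cases p a <;> cases q a <;> simp
  have hp := (card_le_card (hsub (p := p) (q := q))).trans (card_union_le _ _)
  have hq := (card_le_card (hsub (p := q) (q := p))).trans (card_union_le _ _)
  simp only [ne_comm (a := q _)] at hq
  rw [abs_sub_le_iff]
  constructor <;> linarith [(by exact_mod_cast hp : _), (by exact_mod_cast hq : _)]

theorem Nat.cast_sub_one_sq_le (n : ℕ) : ((n - 1 : ℕ) : ℤ) ^ 2 ≤ ((n : ℤ) - 1) ^ 2 := by
  apply sq_le_sq.mpr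
  rw [abs_of_nonneg (by positivity)]
  rcases abs_cases ((n : ℤ) - 1) with ⟨h, _⟩ | ⟨h, _⟩ <;> omega

theorem exists_lt_eq_sub_add_of_add_eq {R : Type*} [AddCommGroupWithOne R] {a b : R}
    {u u' s m : ℕ} (hu : u < s) (hu' : u' < m) (h : a + u = b + u') :
    ∃ k < m + s - 1, a = b - ((s - 1 : ℕ) : R) + k := by
  refine ⟨u' + (s - 1) - u, by omega, ?_⟩
  rw [eq_sub_of_add_eq h, Nat.cast_sub (by omega : u ≤ u' + (s - 1)), Nat.cast_add]
  abel

section square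

variable {h w : ℕ}

theorem square_eq_image (L : ℕ) (q : ZMod h × ZMod w) :
    square L q = (fun uv : ℕ × ℕ => (q.1 + (uv.1 : ZMod h), q.2 + (uv.2 : ZMod w))) ''
      (Set.Iio L ×ˢ Set.Iio L) := by
  ext p
  simp [square, eq_comm, and_assoc]

theorem ncard_square_le (L : ℕ) (q : ZMod h × ZMod w) : (square L q).ncard ≤ L ^ 2 := by
  rw [square_eq_image]
  refine (Set.ncard_image_le ((Set.finite_Iio L).prod (Set.finite_Iio L))).trans ?_
  simp [Set.ncard_prod, sq]

theorem mem_square_of_mem_square_inter {s m : ℕ} {a b p : ZMod h × ZMod w}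
    (hp : p ∈ square s a ∩ square m b) :
    a ∈ square (m + s - 1) (b.1 - ((s - 1 : ℕ) : ZMod h), b.2 - ((s - 1 : ℕ) : ZMod w)) := by
  obtain ⟨⟨u, v, hu, hv, rfl⟩, ⟨u', v', hu', hv', hp⟩⟩ := hp
  obtain ⟨k, hk, hk'⟩ := exists_lt_eq_sub_add_of_add_eq hu hu' congr(Prod.fst $hp)
  obtain ⟨l, hl, hl'⟩ := exists_lt_eq_sub_add_of_add_eq hv hv' congr(Prod.snd $hp)
  exact ⟨k, l, hk, hl, Prod.ext hk' hl'⟩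

end square

theorem block_counts_stability_general
    (h w s m : ℕ) [NeZero h] [NeZero w]
    (P : Type*) (C : Type*)
    (f : (ZMod h × ZMod w → P) → (ZMod h × ZMod w) → C → Bool)
    (hf : ∀ (x x' : ZMod h × ZMod w → P) (ab : ZMod h × ZMod w),
      (∀ p ∈ square s ab, x p = x' p) → ∀ c, f x ab c = f x' ab c)
    (x x' : ZMod h × ZMod w → P)
    (hpatch : ∃ ij : ZMod h × ZMod w, ∀ p ∉ square m ij, x' p = x p)
    (c : C) :
    |((Finset.univ.filter fun ab => f x ab c = true).card : ℤ)
        - ((Finset.univ.filter fun ab => f x' ab c = true).card : ℤ)|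
      ≤ ((m + s - 1) ^ 2 : ℤ) := by
  obtain ⟨ij, hij⟩ := hpatch
  have hchanged : ∀ ab, f x ab c ≠ f x' ab c →
      ab ∈ square (m + s - 1) (ij.1 - ((s - 1 : ℕ) : ZMod h), ij.2 - ((s - 1 : ℕ) : ZMod w)) := by
    intro ab hne
    obtain ⟨p, hp, hxp⟩ : ∃ p ∈ square s ab, x p ≠ x' p := by
      by_contra! hagree
      exact hne (hf x x' ab hagree c)
    exact mem_square_of_mem_square_inter ⟨hp, by_contra fun hp' => hxp (hij p hp').symm⟩
  have hcount : #(univ.filter fun ab => f x ab c ≠ f x' ab c) ≤ (m + s - 1) ^ 2 := by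
    rw [← Set.ncard_coe_finset]
    refine (Set.ncard_le_ncard fun ab hab => hchanged ab ?_).trans (ncard_square_le _ _)
    simpa using hab
  calc _ ≤ (#(univ.filter fun ab => f x ab c ≠ f x' ab c) : ℤ) :=
        abs_card_filter_sub_card_filter_le _ _
    _ ≤ ((m + s - 1 : ℕ) : ℤ) ^ 2 := by exact_mod_cast hcount
    _ ≤ ((m + s - 1) ^ 2 : ℤ) := by exact_mod_cast Nat.cast_sub_one_sq_le (m + s)

/-- **Stability of block-smoothing counts (Equation 11).** If `x'` is an `m × m` patch
perturbation of `x`, then for every class `c` the block-smoothing class counts of `x`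
and `x'` differ by at most `(m + s - 1)²`. -/
theorem block_counts_stability
    (h w s m : ℕ) [NeZero h] [NeZero w] (hs : 0 < s) (hm : 0 < m)
    (P : Type*) (C : Type*) [Fintype C] [LinearOrder C] [Nonempty C]
    (f : (ZMod h × ZMod w → P) → (ZMod h × ZMod w) → C → Bool)
    (hf : ∀ (x x' : ZMod h × ZMod w → P) (ab : ZMod h × ZMod w),
      (∀ p ∈ square s ab, x p = x' p) → ∀ c, f x ab c = f x' ab c)
    (x x' : ZMod h × ZMod w → P)
    (hpatch : ∃ ij : ZMod h × ZMod w, ∀ p ∉ square m ij, x' p = x p)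
    (c : C) :
    |((Finset.univ.filter fun ab => f x ab c = true).card : ℤ)
        - ((Finset.univ.filter fun ab => f x' ab c = true).card : ℤ)|
      ≤ ((m + s - 1) ^ 2 : ℤ) :=
  block_counts_stability_general h w s m P C f hf x x' hpatch c
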